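/- Let N ≥ 3 be an odd integer and let p ∈ {1, …, N−1}. For τ in the complex upper half-plane and z₁, …, z_{N−1} ∈ ℂ, write w_{ij} = z_i + z_{i+1} + ⋯ + z_j for 1 ≤ i ≤ j ≤ N−1. Then ∏_{1≤i≤p≤j≤N−1} ϑ₁₁(2τ, w_{ij} − τ) = i^{p(N−p)} e^{−πiτ p(N−p)/2} e^{πi ∑_{m=1}^{N−1} min(m,p)(N − max(m,p)) z_m} ∏_{1≤i≤p≤j≤N−1} ϑ₀₁(2τ, w_{ij}). -/

import Mathlib

/-- The nome `q = e^{2πiτ}`. -/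
noncomputable def nome (τ : ℂ) : ℂ := Complex.exp (2 * Real.pi * Complex.I * τ)

/-- The Dedekind eta function `η(τ) = q^{1/24} ∏_{n≥1} (1 - qⁿ)`. -/
noncomputable def eta (τ : ℂ) : ℂ :=
  Complex.exp (2 * Real.pi * Complex.I * τ / 24) * ∏' n : ℕ, (1 - nome τ ^ (n + 1))

/-- The Jacobi theta function
`ϑ₁₁(τ,z) = -i q^{1/12} e^{-πiz} η(τ) ∏_{n≥1} (1 - e^{-2πiz} qⁿ)(1 - e^{2πiz} q^{n-1})`. -/
noncomputable def theta11 (τ z : ℂ) : ℂ :=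
  -Complex.I * Complex.exp (2 * Real.pi * Complex.I * τ / 12) *
    Complex.exp (-Real.pi * Complex.I * z) * eta τ *
    ∏' n : ℕ,
      ((1 - Complex.exp (-2 * Real.pi * Complex.I * z) * nome τ ^ (n + 1)) *
       (1 - Complex.exp (2 * Real.pi * Complex.I * z) * nome τ ^ n))

/-- The Jacobi theta function
`ϑ₀₁(τ,z) = ∏_{n≥1} (1 - qⁿ)(1 - e^{2πiz} q^{n-1/2})(1 - e^{-2πiz} q^{n-1/2})`. -/
noncomputable def theta01 (τ z : ℂ) : ℂ :=
  ∏' n : ℕ,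
    ((1 - nome τ ^ (n + 1)) *
     (1 - Complex.exp (2 * Real.pi * Complex.I * z) *
        nome τ ^ n * Complex.exp (Real.pi * Complex.I * τ)) *
     (1 - Complex.exp (-2 * Real.pi * Complex.I * z) *
        nome τ ^ n * Complex.exp (Real.pi * Complex.I * τ)))

open Filter in
private lemma hasProd_zero_of_eq_zero' {f : ℕ → ℂ} {n : ℕ} (h : f n = 0) : HasProd f 0 := by
  have hev : ∀ᶠ s in (atTop : Filter (Finset ℕ)), ∏ i ∈ s, f i = (0 : ℂ) := by
    filter_upwards [Filter.eventually_ge_atTop ({n} : Finset ℕ)] with s hs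
    exact Finset.prod_eq_zero (hs (Finset.mem_singleton_self n)) h
  exact (tendsto_const_nhds : Tendsto (fun _ : Finset ℕ => (0:ℂ)) atTop (nhds 0)).congr'
    (hev.mono fun s hs => hs.symm)

open Filter in
private lemma multipliable_aux (c w : ℂ) (hw : ‖w‖ < 1) :
    Multipliable (fun n : ℕ => 1 - c * w ^ n) := by
  by_cases h : ∃ n : ℕ, 1 - c * w ^ n = 0
  · obtain ⟨n, hn⟩ := h
    exact ⟨0, hasProd_zero_of_eq_zero' hn⟩
  · push_neg at h
    have hgeom : Summable fun n : ℕ => ‖c‖ * ‖w‖ ^ n :=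
      (summable_geometric_of_lt_one (norm_nonneg w) hw).mul_left _
    have hlog : Summable fun n : ℕ => Complex.log (1 - c * w ^ n) := by
      refine Summable.of_norm_bounded_eventually (g := fun n => 3/2 * (‖c‖ * ‖w‖ ^ n))
        (hgeom.mul_left _) ?_
      rw [Nat.cofinite_eq_atTop]
      have h0 : Tendsto (fun n : ℕ => ‖c‖ * ‖w‖ ^ n) atTop (nhds 0) :=
        hgeom.tendsto_atTop_zero
      have h1 : ∀ᶠ n : ℕ in atTop, ‖c‖ * ‖w‖ ^ n ≤ 1/2 :=
        h0.eventually_le_const (by norm_num)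
      filter_upwards [h1] with n hn
      have hb : ‖-(c * w ^ n)‖ ≤ 1/2 := by
        rw [norm_neg, norm_mul, norm_pow]; exact hn
      have := Complex.norm_log_one_add_half_le_self hb
      rw [show (1 : ℂ) + -(c * w ^ n) = 1 - c * w ^ n by ring] at this
      refine this.trans ?_
      rw [norm_neg, norm_mul, norm_pow]
    exact Complex.multipliable_of_summable_log hlog

set_option maxHeartbeats 1000000 in
private lemma key_identity (τ z : ℂ) (hτ : 0 < τ.im) :
    theta11 (2 * τ) (z - τ) =
      Complex.I * Complex.exp (-Real.pi * Complex.I * τ / 2) *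
        Complex.exp (Real.pi * Complex.I * z) * theta01 (2 * τ) z := by
  set r : ℂ := Complex.exp (2 * Real.pi * Complex.I * τ) with hr_def
  set a : ℂ := Complex.exp (2 * Real.pi * Complex.I * z) with ha_def
  have hr_ne : r ≠ 0 := Complex.exp_ne_zero _
  have ha_ne : a ≠ 0 := Complex.exp_ne_zero _
  have hr_lt : ‖r‖ < 1 := by
    rw [hr_def, Complex.norm_exp]
    apply Real.exp_lt_one_iff.mpr
    have h2 : (2 * (Real.pi : ℂ) * Complex.I * τ).re = -(2 * Real.pi * τ.im) := by
      simp [Complex.mul_re, Complex.mul_im]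
    rw [h2]
    have := Real.pi_pos
    nlinarith
  set w : ℂ := r ^ 2 with hw_def
  have hw_lt : ‖w‖ < 1 := by
    rw [hw_def, norm_pow]
    calc ‖r‖ ^ 2 ≤ ‖r‖ := by nlinarith [norm_nonneg r]
    _ < 1 := hr_lt
  have h_nome2 : nome (2 * τ) = w := by
    rw [nome, hw_def, sq, ← Complex.exp_add]; congr 1; ring
  have h_e1 : Complex.exp ((Real.pi : ℂ) * Complex.I * (2 * τ)) = r := by
    rw [hr_def]; congr 1; ring
  have h_em : Complex.exp ((-2 : ℂ) * Real.pi * Complex.I * (z - τ)) = a⁻¹ * r := by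
    rw [ha_def, hr_def, ← Complex.exp_neg, ← Complex.exp_add]; congr 1; ring
  have h_ep : Complex.exp ((2 : ℂ) * Real.pi * Complex.I * (z - τ)) = a * r⁻¹ := by
    rw [ha_def, hr_def, ← Complex.exp_neg, ← Complex.exp_add]; congr 1; ring
  -- multipliability
  have M0 : Multipliable (fun n : ℕ => 1 - w * w ^ n) := multipliable_aux w w hw_lt
  have M2 : Multipliable (fun n : ℕ => 1 - (a * r) * w ^ n) := multipliable_aux _ w hw_lt
  have M3 : Multipliable (fun n : ℕ => 1 - (a⁻¹ * r) * w ^ n) := multipliable_aux _ w hw_lt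
  have M1 : Multipliable (fun n : ℕ => 1 - (a⁻¹ * r ^ 3) * w ^ n) := multipliable_aux _ w hw_lt
  have Mm : Multipliable (fun n : ℕ => 1 - (a * r⁻¹) * w ^ n) := multipliable_aux _ w hw_lt
  -- shift identities
  have hww2 : ∀ n : ℕ, 1 - (a * r) * w ^ n = 1 - (a * r⁻¹) * w ^ (n + 1) := by
    intro n
    have h1 : (a * r⁻¹) * w ^ (n + 1) = (r⁻¹ * r) * ((a * r) * w ^ n) := by
      rw [hw_def, pow_succ]; ring
    rw [h1, inv_mul_cancel₀ hr_ne, one_mul]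
  have hww1 : ∀ n : ℕ, 1 - (a⁻¹ * r ^ 3) * w ^ n = 1 - (a⁻¹ * r) * w ^ (n + 1) := by
    intro n
    congr 1
    rw [hw_def, pow_succ]; ring
  -- the theta11 infinite product
  have hT11 : (∏' n : ℕ,
      ((1 - Complex.exp ((-2:ℂ) * Real.pi * Complex.I * (z - τ)) * nome (2*τ) ^ (n + 1)) *
       (1 - Complex.exp ((2:ℂ) * Real.pi * Complex.I * (z - τ)) * nome (2*τ) ^ n)))
      = -(a * r⁻¹) * ((∏' n : ℕ, (1 - (a⁻¹ * r) * w ^ n)) *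
          (∏' n : ℕ, (1 - (a * r) * w ^ n))) := by
    have step1 : (∏' n : ℕ,
        ((1 - Complex.exp ((-2:ℂ) * Real.pi * Complex.I * (z - τ)) * nome (2*τ) ^ (n + 1)) *
         (1 - Complex.exp ((2:ℂ) * Real.pi * Complex.I * (z - τ)) * nome (2*τ) ^ n)))
        = (∏' n : ℕ, (1 - (a⁻¹ * r ^ 3) * w ^ n)) *
          (∏' n : ℕ, (1 - (a * r⁻¹) * w ^ n)) := by
      rw [← M1.tprod_mul Mm]
      apply tprod_congr
      intro n
      rw [h_em, h_ep, h_nome2]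
      congr 2
      rw [hw_def, pow_succ]; ring
    have step2 : (∏' n : ℕ, (1 - (a * r⁻¹) * w ^ n))
        = (1 - a * r⁻¹) * (∏' n : ℕ, (1 - (a * r) * w ^ n)) := by
      have hshift : Multipliable (fun n : ℕ => 1 - (a * r⁻¹) * w ^ (n + 1)) :=
        M2.congr fun n => hww2 n
      rw [tprod_eq_zero_mul' (f := fun n : ℕ => 1 - (a * r⁻¹) * w ^ n) hshift]
      congr 1
      · rw [pow_zero, mul_one]
      · exact tprod_congr fun n => (hww2 n).symm
    have step3 : (1 : ℂ) - a * r⁻¹ = -(a * r⁻¹) * (1 - a⁻¹ * r) := by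
      have h1 : a * r⁻¹ * (a⁻¹ * r) = 1 := by
        rw [show a * r⁻¹ * (a⁻¹ * r) = (a * a⁻¹) * (r⁻¹ * r) by ring,
          mul_inv_cancel₀ ha_ne, inv_mul_cancel₀ hr_ne, one_mul]
      calc (1 : ℂ) - a * r⁻¹ = -(a * r⁻¹) * 1 + a * r⁻¹ * (a⁻¹ * r) := by rw [h1]; ring
      _ = -(a * r⁻¹) * (1 - a⁻¹ * r) := by ring
    have step4 : (∏' n : ℕ, (1 - (a⁻¹ * r) * w ^ n))
        = (1 - a⁻¹ * r) * (∏' n : ℕ, (1 - (a⁻¹ * r ^ 3) * w ^ n)) := by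
      have hshift : Multipliable (fun n : ℕ => 1 - (a⁻¹ * r) * w ^ (n + 1)) :=
        M1.congr fun n => hww1 n
      rw [tprod_eq_zero_mul' (f := fun n : ℕ => 1 - (a⁻¹ * r) * w ^ n) hshift]
      congr 1
      · rw [pow_zero, mul_one]
      · exact tprod_congr fun n => (hww1 n).symm
    rw [step1, step2, step3, step4]
    ring
  -- theta01 as product of three tprods
  have hT01 : theta01 (2 * τ) z
      = (∏' n : ℕ, (1 - w * w ^ n)) * ((∏' n : ℕ, (1 - (a⁻¹ * r) * w ^ n)) *
          (∏' n : ℕ, (1 - (a * r) * w ^ n))) := by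
    rw [theta01, ← M3.tprod_mul M2, ← M0.tprod_mul (M3.mul M2)]
    apply tprod_congr
    intro n
    have hainv : Complex.exp (-2 * (Real.pi:ℂ) * Complex.I * z) = a⁻¹ := by
      rw [ha_def, ← Complex.exp_neg]; congr 1; ring
    rw [h_nome2, h_e1, ← ha_def, hainv]
    have h1 : w ^ (n + 1) = w * w ^ n := by rw [pow_succ]; ring
    rw [h1]
    ring
  -- eta
  have hEta : eta (2 * τ) = Complex.exp (2 * Real.pi * Complex.I * (2 * τ) / 24) *
      ∏' n : ℕ, (1 - w * w ^ n) := by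
    rw [eta]
    congr 1
    apply tprod_congr
    intro n
    rw [h_nome2, pow_succ]
    ring_nf
  -- assemble
  rw [theta11]
  rw [show Complex.exp (-2 * (Real.pi:ℂ) * Complex.I * (z - τ)) =
    Complex.exp ((-2:ℂ) * Real.pi * Complex.I * (z - τ)) by norm_num]
  rw [show Complex.exp (2 * (Real.pi:ℂ) * Complex.I * (z - τ)) =
    Complex.exp ((2:ℂ) * Real.pi * Complex.I * (z - τ)) by norm_num]
  rw [hT11, hEta, hT01]
  have hsc : -Complex.I * Complex.exp (2 * Real.pi * Complex.I * (2 * τ) / 12) *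
      Complex.exp (-Real.pi * Complex.I * (z - τ)) *
      Complex.exp (2 * Real.pi * Complex.I * (2 * τ) / 24) * (-(a * r⁻¹))
      = Complex.I * Complex.exp (-Real.pi * Complex.I * τ / 2) *
        Complex.exp (Real.pi * Complex.I * z) := by
    rw [ha_def, show r⁻¹ = Complex.exp (-(2 * Real.pi * Complex.I * τ)) by
      rw [hr_def, Complex.exp_neg]]
    rw [show (-Complex.I * Complex.exp (2 * Real.pi * Complex.I * (2 * τ) / 12) *
        Complex.exp (-Real.pi * Complex.I * (z - τ)) *
        Complex.exp (2 * Real.pi * Complex.I * (2 * τ) / 24) *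
        (-(Complex.exp (2 * Real.pi * Complex.I * z) *
          Complex.exp (-(2 * Real.pi * Complex.I * τ)))))
      = Complex.I * (Complex.exp (2 * Real.pi * Complex.I * (2 * τ) / 12) *
          Complex.exp (-Real.pi * Complex.I * (z - τ)) *
          Complex.exp (2 * Real.pi * Complex.I * (2 * τ) / 24) *
          Complex.exp (2 * Real.pi * Complex.I * z) *
          Complex.exp (-(2 * Real.pi * Complex.I * τ))) by ring]
    rw [mul_assoc (Complex.I)]
    congr 1
    rw [← Complex.exp_add, ← Complex.exp_add, ← Complex.exp_add, ← Complex.exp_add,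
      ← Complex.exp_add]
    congr 1
    ring
  calc -Complex.I * Complex.exp (2 * Real.pi * Complex.I * (2 * τ) / 12) *
      Complex.exp (-Real.pi * Complex.I * (z - τ)) *
      (Complex.exp (2 * Real.pi * Complex.I * (2 * τ) / 24) * ∏' n : ℕ, (1 - w * w ^ n)) *
      (-(a * r⁻¹) * ((∏' n : ℕ, (1 - (a⁻¹ * r) * w ^ n)) *
          (∏' n : ℕ, (1 - (a * r) * w ^ n))))
      = (-Complex.I * Complex.exp (2 * Real.pi * Complex.I * (2 * τ) / 12) *
        Complex.exp (-Real.pi * Complex.I * (z - τ)) *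
        Complex.exp (2 * Real.pi * Complex.I * (2 * τ) / 24) * (-(a * r⁻¹))) *
        ((∏' n : ℕ, (1 - w * w ^ n)) * ((∏' n : ℕ, (1 - (a⁻¹ * r) * w ^ n)) *
          (∏' n : ℕ, (1 - (a * r) * w ^ n)))) := by ring
  _ = Complex.I * Complex.exp (-Real.pi * Complex.I * τ / 2) *
      Complex.exp (Real.pi * Complex.I * z) *
      ((∏' n : ℕ, (1 - w * w ^ n)) * ((∏' n : ℕ, (1 - (a⁻¹ * r) * w ^ n)) *
          (∏' n : ℕ, (1 - (a * r) * w ^ n)))) := by rw [hsc]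

private lemma sum_swap_aux (N p : ℕ) (hN : 3 ≤ N) (hp1 : 1 ≤ p) (hp2 : p ≤ N - 1) (z : ℕ → ℂ) :
    ∑ ij ∈ Finset.Icc 1 p ×ˢ Finset.Icc p (N - 1), ∑ m ∈ Finset.Icc ij.1 ij.2, z m
      = ∑ m ∈ Finset.Icc 1 (N - 1), ((min m p * (N - max m p) : ℕ) : ℂ) * z m := by
  have step1 : ∑ ij ∈ Finset.Icc 1 p ×ˢ Finset.Icc p (N - 1),
      ∑ m ∈ Finset.Icc ij.1 ij.2, z m
      = ∑ ij ∈ Finset.Icc 1 p ×ˢ Finset.Icc p (N - 1),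
        ∑ m ∈ Finset.Icc 1 (N - 1), if m ∈ Finset.Icc ij.1 ij.2 then z m else 0 := by
    refine Finset.sum_congr rfl fun ij hij => ?_
    rw [Finset.sum_ite_mem, Finset.inter_eq_right.mpr ?_]
    intro m hm
    simp only [Finset.mem_product, Finset.mem_Icc] at hij hm ⊢
    omega
  rw [step1, Finset.sum_comm]
  refine Finset.sum_congr rfl fun m hm => ?_
  simp only [Finset.mem_Icc] at hm
  rw [← Finset.sum_filter, Finset.sum_const, nsmul_eq_mul]
  congr 2
  have hfilt : (Finset.Icc 1 p ×ˢ Finset.Icc p (N - 1)).filter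
      (fun ij => m ∈ Finset.Icc ij.1 ij.2)
      = ((Finset.Icc 1 p).filter (fun i => i ≤ m)) ×ˢ
        ((Finset.Icc p (N - 1)).filter (fun j => m ≤ j)) := by
    ext ij
    simp only [Finset.mem_filter, Finset.mem_product, Finset.mem_Icc]
    tauto
  rw [hfilt, Finset.card_product]
  have h1 : (Finset.Icc 1 p).filter (fun i => i ≤ m) = Finset.Icc 1 (min m p) := by
    ext i; simp only [Finset.mem_filter, Finset.mem_Icc]; omega
  have h2 : (Finset.Icc p (N - 1)).filter (fun j => m ≤ j) = Finset.Icc (max m p) (N - 1) := by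
    ext j; simp only [Finset.mem_filter, Finset.mem_Icc]; omega
  rw [h1, h2, Nat.card_Icc, Nat.card_Icc]
  have : min m p + 1 - 1 = min m p := by omega
  rw [this]
  congr 1
  omega

/-- The multivariable half-period identity underlying the character formula for the
boundary admissible affine `sl_N`-modules `L(-(N/2)Λ_p)` at level `-N/2` (`N ≥ 3` odd,
`1 ≤ p ≤ N-1`).  With `w_{ij} = z_i + ⋯ + z_j`, taking the product over the pairs
`1 ≤ i ≤ p ≤ j ≤ N-1` (indexing the positive roots of `sl_N` containing `α_p`):
`∏ ϑ₁₁(2τ, w_{ij} - τ) = i^{p(N-p)} e^{-πiτ p(N-p)/2}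
  e^{πi ∑_m min(m,p)(N - max(m,p)) z_m} ∏ ϑ₀₁(2τ, w_{ij})`. -/
theorem theta11_slN_product (N p : ℕ) (hN : 3 ≤ N) (hNodd : Odd N)
    (hp1 : 1 ≤ p) (hp2 : p ≤ N - 1) (τ : ℂ) (hτ : 0 < τ.im) (z : ℕ → ℂ) :
    ∏ ij ∈ Finset.Icc 1 p ×ˢ Finset.Icc p (N - 1),
        theta11 (2 * τ) ((∑ m ∈ Finset.Icc ij.1 ij.2, z m) - τ) =
      Complex.I ^ (p * (N - p)) *
        Complex.exp (-Real.pi * Complex.I * τ * (p * (N - p) : ℕ) / 2) *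
        Complex.exp (Real.pi * Complex.I *
          ∑ m ∈ Finset.Icc 1 (N - 1), ((min m p * (N - max m p) : ℕ) : ℂ) * z m) *
        ∏ ij ∈ Finset.Icc 1 p ×ˢ Finset.Icc p (N - 1),
          theta01 (2 * τ) (∑ m ∈ Finset.Icc ij.1 ij.2, z m) := by
  set s := Finset.Icc 1 p ×ˢ Finset.Icc p (N - 1) with hs_def
  have hcard : s.card = p * (N - p) := by
    rw [hs_def, Finset.card_product, Nat.card_Icc, Nat.card_Icc]
    congr 1 <;> omega
  have step1 : ∏ ij ∈ s, theta11 (2 * τ) ((∑ m ∈ Finset.Icc ij.1 ij.2, z m) - τ)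
      = ∏ ij ∈ s, (Complex.I * Complex.exp (-Real.pi * Complex.I * τ / 2) *
          Complex.exp (Real.pi * Complex.I * ∑ m ∈ Finset.Icc ij.1 ij.2, z m) *
          theta01 (2 * τ) (∑ m ∈ Finset.Icc ij.1 ij.2, z m)) :=
    Finset.prod_congr rfl fun ij _ => key_identity τ _ hτ
  rw [step1]
  simp only [Finset.prod_mul_distrib, Finset.prod_const]
  rw [hcard, ← Complex.exp_sum, ← Finset.mul_sum, sum_swap_aux N p hN hp1 hp2 z]
  congr 2
  rw [← Complex.exp_nat_mul]
  congr 1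
  push_cast
  ring
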